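/- Let G be a connected graph and L a list assignment for G. If there exists a linear order σ on V(G) such that each vertex v is preceded in σ by fewer than |L(v)| of its neighbors, then G is L-swappable. -/

import Mathlib

noncomputable section
open scoped Classical

/-- `φ` is a proper `L`-coloring of `G`: every vertex gets a color from its list,
and adjacent vertices get distinct colors. -/
def IsLColoring {V : Type*} (G : SimpleGraph V) (L : V → Finset ℕ) (φ : V → ℕ) : Prop :=
  (∀ v, φ v ∈ L v) ∧ ∀ ⦃u w⦄, G.Adj u w → φ u ≠ φ w

/-- `KempeChain G φ a b x y` : `y` lies in the `a,b`-component of `x`, i.e. `y` is reachable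
from `x` in the subgraph induced by the vertices colored `a` or `b` by `φ`. -/
def KempeChain {V : Type*} (G : SimpleGraph V) (φ : V → ℕ) (a b : ℕ) : V → V → Prop :=
  Relation.ReflTransGen fun u w => G.Adj u w ∧ (φ u = a ∨ φ u = b) ∧ (φ w = a ∨ φ w = b)

/-- The coloring obtained from `φ` by performing an `(a,b)`-Kempe swap on the
`a,b`-component containing `x`. -/
def kempeSwap {V : Type*} (G : SimpleGraph V) (φ : V → ℕ) (a b : ℕ) (x : V) : V → ℕ := fun w =>
  if KempeChain G φ a b x w then (if φ w = a then b else if φ w = b then a else φ w) else φ w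

/-- `ψ` is obtained from `φ` by a single `L`-valid Kempe swap. -/
def KempeStep {V : Type*} (G : SimpleGraph V) (L : V → Finset ℕ) (φ ψ : V → ℕ) : Prop :=
  ∃ a b x, a ≠ b ∧ (φ x = a ∨ φ x = b) ∧ ψ = kempeSwap G φ a b x ∧ IsLColoring G L ψ

/-- Two colorings are `L`-equivalent if one can be transformed into the other by a
sequence of `L`-valid Kempe swaps. -/
def LEquiv {V : Type*} (G : SimpleGraph V) (L : V → Finset ℕ) (φ ψ : V → ℕ) : Prop :=
  Relation.ReflTransGen (KempeStep G L) φ ψ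

/-- `G` is `L`-swappable: every two of its `L`-colorings are `L`-equivalent. -/
def LSwappable {V : Type*} (G : SimpleGraph V) (L : V → Finset ℕ) : Prop :=
  ∀ φ ψ, IsLColoring G L φ → IsLColoring G L ψ → LEquiv G L φ ψ

/-!
Induction on `|V|`: delete the `r`-maximal vertex `v`, which has fewer than `|L v|` neighbours.
Every `L`-valid Kempe swap of `G - v` lifts to `L`-valid Kempe swaps of `G`. If `v` is not coloured
`a` or `b`, or can first be recoloured with a free colour outside `{a, b}`, the same swap works
in `G`; otherwise counting shows that `v` has at most one neighbour coloured `a` or `b`, so `v`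
hangs off its chain as a pendant vertex and the swap of `G` still restricts to the one of `G - v`.
At the end, `v` is recoloured to its target colour by a single swap.
-/

open Relation Function

theorem exists_forall_ne_rel {α : Type*} [Finite α] [Nonempty α] (r : α → α → Prop)
    [IsStrictTotalOrder α r] : ∃ m, ∀ u ≠ m, r u m := by
  obtain ⟨m, -, hm⟩ :=
    (Finite.wellFounded_of_trans_of_irrefl (swap r)).has_min Set.univ Set.univ_nonempty
  refine ⟨m, fun u hu => ?_⟩
  rcases trichotomous_of r u m with h | h | h
  exacts [h, absurd h hu, absurd h (hm u trivial)]

theorem injOn_and_image_eq_of_ncard_lt {α β : Type*} {f : α → β} {s : Set α} {t : Set β}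
    (hs : s.Finite) (hcard : s.ncard < t.ncard) {x : β} (hx : x ∈ t)
    (hsub : t \ {x} ⊆ f '' s) : Set.InjOn f s ∧ f '' s = t \ {x} := by
  have hdiff : (t \ {x}).ncard = t.ncard - 1 := Set.ncard_sdiff_singleton_of_mem hx
  have himage : (f '' s).ncard ≤ s.ncard := Set.ncard_image_le hs
  have hle : (f '' s).ncard ≤ (t \ {x}).ncard := by omega
  refine ⟨Set.injOn_of_ncard_image_eq ?_ hs,
    (Set.eq_of_subset_of_ncard_le hsub hle (hs.image f)).symm⟩
  have := Set.ncard_le_ncard hsub (hs.image f)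
  omega

theorem eq_swap_of_ne {α : Type*} [DecidableEq α] {a b c d : α} (hc : c = a ∨ c = b)
    (hd : d = a ∨ d = b) (hdc : d ≠ c) :
    d = Equiv.swap a b c := by
  rcases hc with rfl | rfl <;> rcases hd with rfl | rfl <;>
    simp_all [Equiv.swap_apply_left, Equiv.swap_apply_right]

section Kempe

variable {V : Type*} {G : SimpleGraph V} {L : V → Finset ℕ} {φ : V → ℕ} {a b : ℕ} {x : V}

theorem kempeSwap_apply (w : V) :
    kempeSwap G φ a b x w = if KempeChain G φ a b x w then Equiv.swap a b (φ w) else φ w := by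
  simp only [kempeSwap, Equiv.swap_apply_def]

theorem KempeChain.refl : KempeChain G φ a b x x :=
  ReflTransGen.refl

theorem KempeChain.neighborSet_inter_nonempty {y : V} (h : KempeChain G φ a b x y) (hxy : x ≠ y) :
    (G.neighborSet y ∩ φ ⁻¹' {a, b}).Nonempty := by
  rcases h.cases_tail with rfl | ⟨u, -, hadj, hu, -⟩
  · exact absurd rfl hxy
  · exact ⟨u, hadj.symm, hu⟩

theorem swap_ne_of_kempeChain_of_not_kempeChain (hφ : ∀ ⦃u w⦄, G.Adj u w → φ u ≠ φ w)
    {u w : V} (hadj : G.Adj u w) (hu : KempeChain G φ a b x u) (hw : ¬KempeChain G φ a b x w) :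
    Equiv.swap a b (φ u) ≠ φ w := by
  rw [Ne, Equiv.swap_apply_eq_iff]
  intro h
  by_cases hwab : φ w = a ∨ φ w = b
  · refine hw (hu.tail ⟨hadj, ?_, hwab⟩)
    rcases hwab with hwa | hwb
    · simp [h, hwa]
    · simp [h, hwb]
  · rw [not_or] at hwab
    rw [Equiv.swap_apply_of_ne_of_ne hwab.1 hwab.2] at h
    exact hφ hadj h

theorem kempeSwap_ne_of_adj (hφ : ∀ ⦃u w⦄, G.Adj u w → φ u ≠ φ w) {u w : V} (hadj : G.Adj u w) :
    kempeSwap G φ a b x u ≠ kempeSwap G φ a b x w := by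
  rw [kempeSwap_apply, kempeSwap_apply]
  by_cases hu : KempeChain G φ a b x u <;> by_cases hw : KempeChain G φ a b x w <;>
    simp only [hu, hw, if_true, if_false]
  · exact (Equiv.swap a b).injective.ne (hφ hadj)
  · exact swap_ne_of_kempeChain_of_not_kempeChain hφ hadj hu hw
  · exact (swap_ne_of_kempeChain_of_not_kempeChain hφ hadj.symm hw hu).symm
  · exact hφ hadj

theorem isLColoring_kempeSwap (hφ : IsLColoring G L φ)
    (hL : ∀ w, KempeChain G φ a b x w → Equiv.swap a b (φ w) ∈ L w) :
    IsLColoring G L (kempeSwap G φ a b x) := by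
  refine ⟨fun w => ?_, fun u w hadj => kempeSwap_ne_of_adj hφ.2 hadj⟩
  rw [kempeSwap_apply]
  split_ifs with hw
  exacts [hL w hw, hφ.1 w]

theorem IsLColoring.comap {W : Type*} (hφ : IsLColoring G L φ) (f : W → V) :
    IsLColoring (G.comap f) (L ∘ f) (φ ∘ f) :=
  ⟨fun w => hφ.1 (f w), fun _ _ hadj => hφ.2 hadj⟩

theorem KempeStep.isLColoring {ψ : V → ℕ} (h : KempeStep G L φ ψ) : IsLColoring G L ψ := by
  obtain ⟨-, -, -, -, -, -, hψ⟩ := h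
  exact hψ

theorem LEquiv.isLColoring {ψ : V → ℕ} (h : LEquiv G L φ ψ) (hφ : IsLColoring G L φ) :
    IsLColoring G L ψ := by
  induction h with
  | refl => exact hφ
  | tail _ hstep _ => exact hstep.isLColoring

theorem eq_of_kempeChain_of_forall_adj_ne {c : ℕ} (hφ : ∀ ⦃u w⦄, G.Adj u w → φ u ≠ φ w)
    (hc : ∀ u, G.Adj u x → φ u ≠ c) {y : V} (h : KempeChain G φ (φ x) c x y) : y = x := by
  induction h with
  | refl => rfl
  | tail _ hstep ih =>
    subst ih
    obtain ⟨hadj, -, hy | hy⟩ := hstep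
    exacts [absurd hy.symm (hφ hadj), absurd hy (hc _ hadj.symm)]

theorem kempeStep_update (hφ : IsLColoring G L φ) {c : ℕ} (hcL : c ∈ L x) (hc : c ≠ φ x)
    (hnbr : ∀ u, G.Adj u x → φ u ≠ c) : KempeStep G L φ (update φ x c) := by
  have hchain := @eq_of_kempeChain_of_forall_adj_ne _ _ _ _ _ hφ.2 hnbr
  have hswap : kempeSwap G φ (φ x) c x = update φ x c := by
    funext y
    rw [kempeSwap_apply]
    by_cases hy : y = x
    · rw [hy, if_pos KempeChain.refl, Equiv.swap_apply_left, update_self]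
    · rw [if_neg (mt hchain hy), update_of_ne hy]
  refine ⟨φ x, c, x, hc.symm, Or.inl rfl, hswap.symm, hswap ▸ isLColoring_kempeSwap hφ ?_⟩
  intro w hw
  rw [hchain hw, Equiv.swap_apply_left]
  exact hcL

end Kempe

section DeleteVertex

variable {V : Type*} {G : SimpleGraph V} {L : V → Finset ℕ} {φ : V → ℕ} {a b : ℕ} {v : V}

theorem KempeChain.of_comap {x y : {u // u ≠ v}}
    (h : KempeChain (G.comap Subtype.val) (φ ∘ Subtype.val) a b x y) :
    KempeChain G φ a b x y :=
  ReflTransGen.lift Subtype.val (fun _ _ h => h) x y h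

/-- A chain of `G` through `v` enters and leaves `v` by the same edge, since at most one neighbour
of `v` lies on it; so it can be shortcut in `G - v`. -/
theorem KempeChain.comap_of_subsingleton {x : {u // u ≠ v}}
    (hv : (φ v = a ∨ φ v = b) → (G.neighborSet v ∩ φ ⁻¹' {a, b}).Subsingleton) {y : V}
    (h : KempeChain G φ a b x y) :
    (∀ hy : y ≠ v, KempeChain (G.comap Subtype.val) (φ ∘ Subtype.val) a b x ⟨y, hy⟩) ∧
    (y = v → ∀ u : {u // u ≠ v}, G.Adj v u → (φ u = a ∨ φ u = b) →
      KempeChain (G.comap Subtype.val) (φ ∘ Subtype.val) a b x u) := by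
  induction h with
  | refl => exact ⟨fun _ => ReflTransGen.refl, fun hx => absurd hx x.2⟩
  | @tail y' y _ hstep ih =>
    obtain ⟨hadj, hy', hy⟩ := hstep
    refine ⟨fun hyv => ?_, ?_⟩
    · by_cases hy'v : y' = v
      · subst hy'v
        exact ih.2 rfl ⟨y, hyv⟩ hadj hy
      · exact (ih.1 hy'v).tail ⟨hadj, hy', hy⟩
    · rintro rfl u hu hua
      have hy'u : u = ⟨y', hadj.ne⟩ :=
        Subtype.ext (hv hy ⟨hu, hua⟩ ⟨hadj.symm, hy'⟩)
      exact hy'u ▸ ih.1 hadj.ne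

theorem kempeChain_comap_iff
    (hv : (φ v = a ∨ φ v = b) → (G.neighborSet v ∩ φ ⁻¹' {a, b}).Subsingleton)
    {x y : {u // u ≠ v}} :
    KempeChain (G.comap Subtype.val) (φ ∘ Subtype.val) a b x y ↔ KempeChain G φ a b x y :=
  ⟨KempeChain.of_comap, fun h => (h.comap_of_subsingleton hv).1 y.2⟩

theorem kempeSwap_comp_val
    (hv : (φ v = a ∨ φ v = b) → (G.neighborSet v ∩ φ ⁻¹' {a, b}).Subsingleton)
    (x : {u // u ≠ v}) :
    kempeSwap G φ a b x ∘ Subtype.val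
      = kempeSwap (G.comap Subtype.val) (φ ∘ Subtype.val) a b x := by
  funext y
  simp only [comp_apply, kempeSwap_apply, kempeChain_comap_iff hv]

theorem exists_lEquiv_comp_val_eq_kempeSwap (hφ : IsLColoring G L φ) (hab : a ≠ b)
    {x : {u // u ≠ v}} (hx : φ x = a ∨ φ x = b)
    (hτ : IsLColoring (G.comap Subtype.val) (L ∘ Subtype.val)
      (kempeSwap (G.comap Subtype.val) (φ ∘ Subtype.val) a b x))
    (hv : (φ v = a ∨ φ v = b) → (G.neighborSet v ∩ φ ⁻¹' {a, b}).Subsingleton)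
    (hvL : (G.neighborSet v ∩ φ ⁻¹' {a, b}).Nonempty → Equiv.swap a b (φ v) ∈ L v) :
    ∃ τ, LEquiv G L φ τ ∧
      τ ∘ Subtype.val = kempeSwap (G.comap Subtype.val) (φ ∘ Subtype.val) a b x := by
  refine ⟨_, .single ⟨a, b, x, hab, hx, rfl, isLColoring_kempeSwap hφ fun w hw => ?_⟩,
    kempeSwap_comp_val hv x⟩
  by_cases hwv : w = v
  · subst hwv
    exact hvL (hw.neighborSet_inter_nonempty x.2)
  · have := hτ.1 ⟨w, hwv⟩
    rw [← kempeSwap_comp_val hv] at this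
    simpa only [comp_apply, kempeSwap_apply, if_pos hw] using this

theorem exists_lEquiv_comp_val_eq_kempeSwap_of_ne (hφ : IsLColoring G L φ) {a b : ℕ}
    (hab : a ≠ b) {x : {u // u ≠ v}} (hx : φ x = a ∨ φ x = b)
    (hτ : IsLColoring (G.comap Subtype.val) (L ∘ Subtype.val)
      (kempeSwap (G.comap Subtype.val) (φ ∘ Subtype.val) a b x))
    (hva : φ v ≠ a) (hvb : φ v ≠ b) :
    ∃ τ, LEquiv G L φ τ ∧
      τ ∘ Subtype.val = kempeSwap (G.comap Subtype.val) (φ ∘ Subtype.val) a b x := by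
  refine exists_lEquiv_comp_val_eq_kempeSwap hφ hab hx hτ (fun h => (h.elim hva hvb).elim)
    fun _ => ?_
  rw [Equiv.swap_apply_of_ne_of_ne hva hvb]
  exact hφ.1 v

/-- When no colour of `L v` outside `{a, b}` is free at `v`, the bound `deg v < |L v|` forces
the neighbours of `v` to carry every colour of `L v` other than `φ v`, each exactly once. -/
theorem exists_lEquiv_comp_val_eq_kempeSwap_of_saturated [Finite V]
    (hdeg : (G.neighborSet v).ncard < (L v).card) (hφ : IsLColoring G L φ) {a b : ℕ}
    (hab : a ≠ b) {x : {u // u ≠ v}} (hx : φ x = a ∨ φ x = b)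
    (hτ : IsLColoring (G.comap Subtype.val) (L ∘ Subtype.val)
      (kempeSwap (G.comap Subtype.val) (φ ∘ Subtype.val) a b x))
    (hvab : φ v = a ∨ φ v = b)
    (hsat : ∀ c ∈ L v, c ≠ a → c ≠ b → c ∈ φ '' G.neighborSet v) :
    ∃ τ, LEquiv G L φ τ ∧
      τ ∘ Subtype.val = kempeSwap (G.comap Subtype.val) (φ ∘ Subtype.val) a b x := by
  rcases (G.neighborSet v ∩ φ ⁻¹' {a, b}).eq_empty_or_nonempty with hS | ⟨u₀, hu₀⟩
  · exact exists_lEquiv_comp_val_eq_kempeSwap hφ hab hx hτ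
      (fun _ => hS ▸ Set.subsingleton_empty) fun hne => absurd hS hne.ne_empty
  have hS_color : ∀ u ∈ G.neighborSet v ∩ φ ⁻¹' {a, b}, φ u = Equiv.swap a b (φ v) :=
    fun u hu => eq_swap_of_ne hvab hu.2 (hφ.2 hu.1).symm
  have hfull : ↑(L v) \ {φ v} ⊆ φ '' G.neighborSet v := by
    rintro c ⟨hcL, hcv⟩
    by_cases hcab : c = a ∨ c = b
    · exact ⟨u₀, hu₀.1, (hS_color u₀ hu₀).trans (eq_swap_of_ne hvab hcab hcv).symm⟩
    · rw [not_or] at hcab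
      exact hsat c hcL hcab.1 hcab.2
  obtain ⟨hinj, himage⟩ := injOn_and_image_eq_of_ncard_lt (Set.toFinite _)
    (by rwa [Set.ncard_coe_finset]) (Finset.mem_coe.2 (hφ.1 v)) hfull
  refine exists_lEquiv_comp_val_eq_kempeSwap hφ hab hx hτ
    (fun _ u hu w hw => hinj hu.1 hw.1 ((hS_color u hu).trans (hS_color w hw).symm)) fun _ => ?_
  have hu₀L := himage ▸ Set.mem_image_of_mem φ hu₀.1
  rw [← hS_color u₀ hu₀]
  exact hu₀L.1

theorem exists_lEquiv_comp_val_eq_of_kempeStep [Finite V]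
    (hdeg : (G.neighborSet v).ncard < (L v).card) (hφ : IsLColoring G L φ)
    {τ' : {u // u ≠ v} → ℕ}
    (h : KempeStep (G.comap Subtype.val) (L ∘ Subtype.val) (φ ∘ Subtype.val) τ') :
    ∃ τ, LEquiv G L φ τ ∧ τ ∘ Subtype.val = τ' := by
  obtain ⟨a, b, x, hab, hx, rfl, hτ⟩ := h
  by_cases hvab : φ v = a ∨ φ v = b
  swap
  · rw [not_or] at hvab
    exact exists_lEquiv_comp_val_eq_kempeSwap_of_ne hφ hab hx hτ hvab.1 hvab.2
  by_cases hfree : ∃ c ∈ L v, c ≠ a ∧ c ≠ b ∧ c ∉ φ '' G.neighborSet v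
  · obtain ⟨c, hcL, hca, hcb, hcN⟩ := hfree
    have hstep : KempeStep G L φ (update φ v c) :=
      kempeStep_update hφ hcL (by rcases hvab with h | h <;> rw [h] <;> assumption)
        fun u hu hc => hcN ⟨u, hu.symm, hc⟩
    have hres : update φ v c ∘ Subtype.val = φ ∘ (Subtype.val : {u // u ≠ v} → V) :=
      funext fun u => update_of_ne u.2 _ _
    rw [← hres] at hx hτ ⊢
    obtain ⟨τ, hτ, hτx⟩ := exists_lEquiv_comp_val_eq_kempeSwap_of_ne
      hstep.isLColoring hab hx hτ (by simpa using hca) (by simpa using hcb)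
    exact ⟨τ, .head hstep hτ, hτx⟩
  · refine exists_lEquiv_comp_val_eq_kempeSwap_of_saturated hdeg hφ hab hx hτ hvab
      fun c hcL hca hcb => ?_
    by_contra hcN
    exact hfree ⟨c, hcL, hca, hcb, hcN⟩

theorem exists_lEquiv_comp_val_eq [Finite V] (hdeg : (G.neighborSet v).ncard < (L v).card)
    (hφ : IsLColoring G L φ) {ψ' : {u // u ≠ v} → ℕ}
    (h : LEquiv (G.comap Subtype.val) (L ∘ Subtype.val) (φ ∘ Subtype.val) ψ') :
    ∃ ψ, LEquiv G L φ ψ ∧ ψ ∘ Subtype.val = ψ' := by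
  induction h with
  | refl => exact ⟨φ, .refl, rfl⟩
  | tail _ hstep ih =>
    obtain ⟨τ, hφτ, rfl⟩ := ih
    obtain ⟨ψ, hτψ, rfl⟩ :=
      exists_lEquiv_comp_val_eq_of_kempeStep hdeg (hφτ.isLColoring hφ) hstep
    exact ⟨ψ, hφτ.trans hτψ, rfl⟩

end DeleteVertex

theorem lEquiv_of_forall_ne_eq {V : Type*} {G : SimpleGraph V} {L : V → Finset ℕ} {φ ψ : V → ℕ}
    {v : V} (hφ : IsLColoring G L φ) (hψ : IsLColoring G L ψ) (h : ∀ u ≠ v, φ u = ψ u) :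
    LEquiv G L φ ψ := by
  have hupdate : update φ v (ψ v) = ψ := by
    funext u
    by_cases hu : u = v
    · rw [hu, update_self]
    · rw [update_of_ne hu, h u hu]
  by_cases hv : φ v = ψ v
  · rw [← hv, update_eq_self] at hupdate
    exact hupdate ▸ .refl
  · rw [← hupdate]
    exact .single <| kempeStep_update hφ (hψ.1 v) (Ne.symm hv)
      fun u hu hc => hψ.2 hu ((h u hu.ne).symm.trans hc)

theorem LSwappable.of_comap_val {V : Type*} [Finite V] {G : SimpleGraph V} {L : V → Finset ℕ}
    {v : V} (hdeg : (G.neighborSet v).ncard < (L v).card)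
    (h : LSwappable (G.comap (Subtype.val : {u // u ≠ v} → V)) (L ∘ Subtype.val)) :
    LSwappable G L := fun φ ψ hφ hψ => by
  obtain ⟨τ, hφτ, hτ⟩ :=
    exists_lEquiv_comp_val_eq hdeg hφ (h _ _ (hφ.comap Subtype.val) (hψ.comap Subtype.val))
  exact hφτ.trans <|
    lEquiv_of_forall_ne_eq (hφτ.isLColoring hφ) hψ fun u hu => congrFun hτ ⟨u, hu⟩

theorem LSwappable.of_forall_ncard_lt {V : Type*} [Finite V] (G : SimpleGraph V)
    (L : V → Finset ℕ) (r : V → V → Prop) [IsStrictTotalOrder V r]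
    (h : ∀ v, {u | G.Adj u v ∧ r u v}.ncard < (L v).card) : LSwappable G L := by
  induction hn : Nat.card V using Nat.strong_induction_on generalizing V with
  | _ n ih =>
  rcases isEmpty_or_nonempty V with hV | hV
  · intro φ ψ _ _
    rw [Subsingleton.elim φ ψ]
    exact .refl
  obtain ⟨v, hv⟩ := exists_forall_ne_rel r
  have hdeg : (G.neighborSet v).ncard < (L v).card := by
    convert h v using 3
    ext u
    simpa [G.adj_comm v u] using fun hu => hv u hu.ne
  have : IsStrictTotalOrder _ (Subrel r (· ≠ v)) := {}
  refine LSwappable.of_comap_val hdeg <| ih _ (hn ▸ Finite.card_subtype_lt (not_not.2 rfl)) _ _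
    (Subrel r (· ≠ v)) (fun w => lt_of_le_of_lt ?_ (h w)) rfl
  exact Set.ncard_le_ncard_of_injOn Subtype.val (fun u hu => hu) Subtype.val_injective.injOn

theorem corollary5a_general {V : Type*} [Fintype V] (G : SimpleGraph V)
    (L : V → Finset ℕ) (r : V → V → Prop) (hr : IsStrictTotalOrder V r)
    (h : ∀ v, {u | G.Adj u v ∧ r u v}.ncard < (L v).card) :
    LSwappable G L :=
  LSwappable.of_forall_ncard_lt G L r h

/-- **Corollary 5, first statement.** Let `G` be a connected graph and `L` a list
assignment for `G`.  If there exists a linear (strict total) order `r` on `V(G)` such that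
each vertex `v` is preceded in the order by fewer than `|L(v)|` of its neighbors,
then `G` is `L`-swappable. -/
theorem corollary5a {V : Type*} [Fintype V] (G : SimpleGraph V) (hconn : G.Connected)
    (L : V → Finset ℕ) (r : V → V → Prop) (hr : IsStrictTotalOrder V r)
    (h : ∀ v, {u | G.Adj u v ∧ r u v}.ncard < (L v).card) :
    LSwappable G L :=
  corollary5a_general G L r hr h
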